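/- Let G be a finite simple graph and suppose the separable γ-set A = A1 ∪ A2 of G is effective under a permutation π of V(G), i.e., π(A) is a γ-set of the copy G' of G that can be separated with dominating part B2' = π(A2) (so π(A2) dominates V(G') − π(A)). Then B1' = π(A1) is an independent set of G', there is no edge of G' between π(A1) and π(A2), and π(A1) is a 2-packing of G'. -/

import Mathlib

open SimpleGraph

variable {V : Type*}

/-- `D` is a dominating set of `G`: every vertex is in `D` or adjacent to a vertex of `D`. -/
def IsDomSet (G : SimpleGraph V) (D : Set V) : Prop :=
  ∀ v : V, ∃ d ∈ D, d = v ∨ G.Adj d v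

/-- The domination number of `G`: minimum cardinality of a dominating set. -/
noncomputable def domNum (G : SimpleGraph V) : ℕ :=
  sInf {n | ∃ D : Set V, IsDomSet G D ∧ D.ncard = n}

/-- The prism `πG` of `G`: two disjoint copies of `G` together with the matching
`{u (π u) : u ∈ V(G)}`, the second copy playing the role of `G'`. -/
def prism (G : SimpleGraph V) (π : Equiv.Perm V) : SimpleGraph (V ⊕ V) where
  Adj a b :=
    match a, b with
    | Sum.inl u, Sum.inl v => G.Adj u v
    | Sum.inr u, Sum.inr v => G.Adj u v
    | Sum.inl u, Sum.inr v => π u = v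
    | Sum.inr u, Sum.inl v => π v = u
  symm := ⟨by
    rintro (u | u) (v | v) h
    · exact G.adj_symm h
    · exact h
    · exact h
    · exact G.adj_symm h⟩
  loopless := ⟨by
    rintro (u | u) h
    · exact G.irrefl h
    · exact G.irrefl h⟩

/-- The closed neighborhood `N[v]` of a vertex. -/
def closedNbhd (G : SimpleGraph V) (v : V) : Set V :=
  insert v (G.neighborSet v)

/-- `x` is a `C₃`-free vertex: non-isolated and belonging to no triangle of `G`. -/
def C3Free (G : SimpleGraph V) (x : V) : Prop :=
  (∃ y, G.Adj x y) ∧ ∀ u v : V, G.Adj x u → G.Adj x v → ¬ G.Adj u v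

/-- `A = A1 ∪ A2` is a separable γ-set of `G` (an `A1`-γ-set): `A1, A2` are nonempty,
disjoint, `A` is a γ-set, and `A1` dominates `V(G) - A`. -/
def SepGammaSet (G : SimpleGraph V) (A1 A2 : Set V) : Prop :=
  A1.Nonempty ∧ A2.Nonempty ∧ Disjoint A1 A2 ∧
  IsDomSet G (A1 ∪ A2) ∧ (A1 ∪ A2).ncard = domNum G ∧
  ∀ v ∉ A1 ∪ A2, ∃ u ∈ A1, G.Adj u v

/-- The separable γ-set `A = A1 ∪ A2` is effective under `π`: `π(A)` is a γ-set of the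
copy `G'` of `G` (identified with `G`) whose dominating part is `B2' = π(A2)`,
i.e. `π(A2)` dominates `V(G') - π(A)`. -/
def Effective (G : SimpleGraph V) (π : Equiv.Perm V) (A1 A2 : Set V) : Prop :=
  IsDomSet G (⇑π '' (A1 ∪ A2)) ∧ (⇑π '' (A1 ∪ A2)).ncard = domNum G ∧
  ∀ v ∉ ⇑π '' (A1 ∪ A2), ∃ u ∈ ⇑π '' A2, G.Adj u v

/-- The star `K_{1,m}` on `Fin (m+1)`, with center `0` adjacent to the `m` leaves. -/
def starGraph (m : ℕ) : SimpleGraph (Fin (m + 1)) where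
  Adj a b := (a = 0 ∧ b ≠ 0) ∨ (b = 0 ∧ a ≠ 0)
  symm := ⟨fun a b h => Or.symm h⟩
  loopless := ⟨fun a h => by rcases h with ⟨h1, h2⟩ | ⟨h1, h2⟩ <;> exact h2 h1⟩

theorem IsDomSet.domNum_le_ncard {G : SimpleGraph V} {D : Set V} (h : IsDomSet G D) :
    domNum G ≤ D.ncard :=
  Nat.sInf_le ⟨D, h, rfl⟩

section MinimumDominatingSet

variable {G : SimpleGraph V} {D T : Set V}

/-- Otherwise `D \ {u}` would still dominate: `u` by its neighbour `w`, the outside by `T`. -/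
theorem not_adj_of_mem_of_notMem (hfin : D.Finite) (hmin : D.ncard ≤ domNum G) (hT : T ⊆ D)
    (hTdom : ∀ v ∉ D, ∃ t ∈ T, G.Adj t v) {u w : V} (hu : u ∈ D) (huT : u ∉ T) (hw : w ∈ D) :
    ¬ G.Adj w u := by
  intro hwu
  have hdom : IsDomSet G (D \ {u}) := by
    intro v
    by_cases hvD : v ∈ D
    · by_cases hvu : v = u
      · subst hvu
        exact ⟨w, ⟨hw, hwu.ne⟩, Or.inr hwu⟩
      · exact ⟨v, ⟨hvD, hvu⟩, Or.inl rfl⟩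
    · obtain ⟨t, ht, htv⟩ := hTdom v hvD
      exact ⟨t, ⟨hT ht, ne_of_mem_of_not_mem ht huT⟩, Or.inr htv⟩
  have := Set.ncard_sdiff_singleton_lt_of_mem hu hfin
  have := hdom.domNum_le_ncard
  omega

/-- Otherwise swapping `u, v` for their common neighbour `x` would give a smaller dominating set. -/
theorem not_adj_and_adj_of_notMem (hfin : D.Finite) (hmin : D.ncard ≤ domNum G) (hT : T ⊆ D)
    (hTdom : ∀ v ∉ D, ∃ t ∈ T, G.Adj t v) {u v x : V} (hu : u ∈ D) (huT : u ∉ T) (hv : v ∈ D)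
    (hvT : v ∉ T) (huv : u ≠ v) (hx : x ∉ D) : ¬ (G.Adj u x ∧ G.Adj v x) := by
  rintro ⟨hux, hvx⟩
  have huvD : {u, v} ⊆ D := Set.insert_subset hu (Set.singleton_subset_iff.mpr hv)
  have hdom : IsDomSet G (insert x (D \ {u, v})) := by
    intro y
    by_cases hyD : y ∈ D
    · by_cases hyuv : y = u ∨ y = v
      · rcases hyuv with rfl | rfl
        exacts [⟨x, Set.mem_insert _ _, Or.inr hux.symm⟩, ⟨x, Set.mem_insert _ _, Or.inr hvx.symm⟩]
      · exact ⟨y, Set.mem_insert_of_mem _ ⟨hyD, hyuv⟩, Or.inl rfl⟩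
    · obtain ⟨t, ht, hty⟩ := hTdom y hyD
      have htuv : t ∉ ({u, v} : Set V) := by
        rintro (rfl | rfl)
        exacts [huT ht, hvT ht]
      exact ⟨t, Set.mem_insert_of_mem _ ⟨hT ht, htuv⟩, Or.inr hty⟩
  have hcard : (insert x (D \ {u, v})).ncard = D.ncard - 2 + 1 := by
    rw [Set.ncard_insert_of_notMem (fun h => hx h.1) hfin.sdiff, Set.ncard_sdiff huvD,
      Set.ncard_pair huv]
  have h2 : 2 ≤ D.ncard := Set.ncard_pair huv ▸ Set.ncard_le_ncard huvD hfin
  have := hdom.domNum_le_ncard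
  omega

theorem closedNbhd_inter_closedNbhd_eq_empty (hfin : D.Finite) (hmin : D.ncard ≤ domNum G)
    (hT : T ⊆ D) (hTdom : ∀ v ∉ D, ∃ t ∈ T, G.Adj t v) {u v : V} (hu : u ∈ D) (huT : u ∉ T)
    (hv : v ∈ D) (hvT : v ∉ T) (huv : u ≠ v) : closedNbhd G u ∩ closedNbhd G v = ∅ := by
  have hnadj : ∀ {a b}, a ∈ D → a ∉ T → b ∈ D → ¬ G.Adj b a :=
    not_adj_of_mem_of_notMem hfin hmin hT hTdom
  refine Set.eq_empty_of_forall_notMem fun x ⟨hxu, hxv⟩ => ?_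
  rcases hxu with rfl | hux
  · rcases hxv with rfl | hvx
    exacts [huv rfl, hnadj hu huT hv hvx]
  rcases hxv with rfl | hvx
  · exact hnadj hv hvT hu hux
  by_cases hxD : x ∈ D
  · exact hnadj hu huT hxD hux.symm
  · exact not_adj_and_adj_of_notMem hfin hmin hT hTdom hu huT hv hvT huv hxD ⟨hux, hvx⟩

end MinimumDominatingSet

/-- Observation 1: if a separable γ-set `A = A1 ∪ A2` is effective under `π`,
then `B1' = π(A1)` is independent, `E(B1', B2') = ∅`, and `B1'` is a 2-packing of `G'`. -/
theorem effective_obs [Fintype V] (G : SimpleGraph V) (π : Equiv.Perm V) (A1 A2 : Set V)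
    (hsep : SepGammaSet G A1 A2) (heff : Effective G π A1 A2) :
    (∀ u ∈ ⇑π '' A1, ∀ v ∈ ⇑π '' A1, u ≠ v → ¬ G.Adj u v) ∧
    (∀ u ∈ ⇑π '' A1, ∀ v ∈ ⇑π '' A2, ¬ G.Adj u v) ∧
    (∀ u ∈ ⇑π '' A1, ∀ v ∈ ⇑π '' A1, u ≠ v → closedNbhd G u ∩ closedNbhd G v = ∅) := by
  obtain ⟨-, -, hdisj, -, -, -⟩ := hsep
  obtain ⟨-, hcard, hTdom⟩ := heff
  have hfin := Set.toFinite (⇑π '' (A1 ∪ A2))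
  have hT : ⇑π '' A2 ⊆ ⇑π '' (A1 ∪ A2) := Set.image_mono Set.subset_union_right
  have hD : ⇑π '' A1 ⊆ ⇑π '' (A1 ∪ A2) := Set.image_mono Set.subset_union_left
  have hnT : ∀ u ∈ ⇑π '' A1, u ∉ ⇑π '' A2 := fun u hu =>
    Set.disjoint_left.mp ((Set.disjoint_image_iff π.injective).mpr hdisj) hu
  have hnadj : ∀ {a b}, a ∈ ⇑π '' (A1 ∪ A2) → a ∉ ⇑π '' A2 → b ∈ ⇑π '' (A1 ∪ A2) → ¬ G.Adj b a :=
    not_adj_of_mem_of_notMem hfin hcard.le hT hTdom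
  refine ⟨fun u hu v hv _ => hnadj (hD hv) (hnT v hv) (hD hu),
    fun u hu v hv huv => hnadj (hD hu) (hnT u hu) (hT hv) huv.symm,
    fun u hu v hv => ?_⟩
  exact closedNbhd_inter_closedNbhd_eq_empty hfin hcard.le hT hTdom (hD hu) (hnT u hu) (hD hv)
    (hnT v hv)
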